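/- arXiv:1912.04680 — 3 statements merged into one kernel-verified Lean document; each statement's English description precedes it below -/
import Mathlib

section
/- (Lemma 2 of the paper.) Suppose P0, P1 : ℕ → ℝ satisfy the steady-state CME of the generalized ON-OFF model with rate functions K1, K2, K3 : ℕ → ℝ, and set P(n) = P0(n) + P1(n). Let (a_n) and (b_n) be the paper's auxiliary sequences associated with K1, K2, K3. Then for every n ≥ 1, P(n) = (1/n!)·[a_n·P(0) − b_n·P0(0)]. -/
/-!
Adding the two balance equations makes the net flux between `n` and `n + 1` telescope, so
`(n + 1) P(n + 1) = K3(n) P1(n)`. In terms of `u n = n! P(n)` and `v n = n! P0(n)` the CME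
then becomes the triangular first-order system `u (n + 1) = K3 n (u n - v n)`,
`v (n + 1) = c n v n - K2 n u n` with `c n = n + K1 n + K2 n`. Solving the second equation
for `v` in terms of the earlier `u`'s and inserting it into the first, strong induction shows
that `u n` depends linearly on `(u 0, v 0)`; the coefficients obey exactly the recursions of
`a` and `b` once these are extended by `a 0 = 1`, `b 0 = 0`.
-/

open Finset

theorem first_order_recurrence_solution {R : Type*} [CommSemiring R] {x c d : ℕ → R}
    (h : ∀ k, x (k + 1) = c k * x k + d k) (m : ℕ) :
    x m = (∏ i ∈ range m, c i) * x 0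
      + ∑ i ∈ range m, d i * ∏ j ∈ Ico (i + 1) m, c j := by
  induction m with
  | zero => simp
  | succ m ih =>
    have hprod : ∀ i ∈ range m, d i * ∏ j ∈ Ico (i + 1) (m + 1), c j
        = c m * (d i * ∏ j ∈ Ico (i + 1) m, c j) := fun i hi => by
      rw [prod_Ico_succ_top (mem_range.mp hi)]; ring
    rw [h, ih, sum_range_succ, sum_congr rfl hprod, ← mul_sum, prod_range_succ, Ico_self,
      prod_empty]
    ring

theorem eq_mul_sub_mul_of_triangular_recurrence {R : Type*} [CommRing R]
    {c K2 K3 u v A B : ℕ → R}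
    (hu : ∀ n, u (n + 1) = K3 n * (u n - v n))
    (hv : ∀ n, v (n + 1) = c n * v n - K2 n * u n)
    (hA0 : A 0 = 1)
    (hA : ∀ n, A (n + 1) =
      K3 n * (A n + ∑ i ∈ range n, K2 i * A i * ∏ j ∈ Ico (i + 1) n, c j))
    (hB0 : B 0 = 0)
    (hB : ∀ n, B (n + 1) =
      K3 n * (B n + ∑ i ∈ range n, K2 i * B i * ∏ j ∈ Ico (i + 1) n, c j
        + ∏ i ∈ range n, c i))
    (n : ℕ) : u n = A n * u 0 - B n * v 0 := by
  induction n using Nat.strong_induction_on with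
  | _ n ih =>
    cases n with
    | zero => rw [hA0, hB0]; ring
    | succ n =>
      have hv_closed := first_order_recurrence_solution (x := v) (c := c)
        (d := fun k => -(K2 k * u k)) (fun k => by rw [hv k]; ring) n
      have hsum : ∑ i ∈ range n, -(K2 i * u i) * ∏ j ∈ Ico (i + 1) n, c j
          = (∑ i ∈ range n, K2 i * B i * ∏ j ∈ Ico (i + 1) n, c j) * v 0
            - (∑ i ∈ range n, K2 i * A i * ∏ j ∈ Ico (i + 1) n, c j) * u 0 := by
        rw [sum_mul, sum_mul, ← sum_sub_distrib]
        refine sum_congr rfl fun i hi => ?_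
        rw [ih i (by have := mem_range.mp hi; omega)]
        ring
      rw [hu, hv_closed, hsum, ih n (Nat.lt_succ_self n), hA, hB]
      ring

theorem sum_range_update_zero_mul_prod {R : Type*} [CommSemiring R] (w c s : ℕ → R) (x : R)
    (m : ℕ) :
    ∑ i ∈ range (m + 1), w i * Function.update s 0 x i * ∏ j ∈ Ico (i + 1) (m + 1), c j
      = ∑ i ∈ Icc 1 m, w i * s i * ∏ j ∈ Icc (i + 1) m, c j
        + w 0 * x * ∏ i ∈ Icc 1 m, c i := by
  rw [sum_range_eq_add_Ico _ (by omega : 0 < m + 1), add_comm, Ico_add_one_right_eq_Icc,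
    Function.update_self]
  congr 1
  refine sum_congr rfl fun i hi => ?_
  rw [Function.update_of_ne (by have := (mem_Icc.mp hi).1; omega), Ico_add_one_right_eq_Icc]

section OnOffModel

variable {K1 K2 K3 P0 P1 : ℕ → ℝ}

theorem flux_balance
    (hCME0 : ∀ n : ℕ,
      -K1 n * P0 n + K2 n * P1 n + ((n : ℝ) + 1) * P0 (n + 1) - (n : ℝ) * P0 n = 0)
    (hCME1 : ∀ n : ℕ,
      K1 n * P0 n - K2 n * P1 n + (if n = 0 then 0 else K3 (n - 1) * P1 (n - 1))
        - K3 n * P1 n + ((n : ℝ) + 1) * P1 (n + 1) - (n : ℝ) * P1 n = 0)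
    (n : ℕ) : ((n : ℝ) + 1) * (P0 (n + 1) + P1 (n + 1)) = K3 n * P1 n := by
  induction n with
  | zero =>
    have h0 := hCME0 0
    have h1 := hCME1 0
    rw [if_pos rfl] at h1
    simp only [Nat.cast_zero] at h0 h1 ⊢
    linear_combination h0 + h1
  | succ k ih =>
    have h0 := hCME0 (k + 1)
    have h1 := hCME1 (k + 1)
    simp only [Nat.succ_ne_zero, if_false, Nat.add_sub_cancel, Nat.cast_succ] at h0 h1 ⊢
    linear_combination h0 + h1 + ih

theorem factorial_mul_succ_of_flux_balance {n : ℕ}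
    (hflux : ((n : ℝ) + 1) * (P0 (n + 1) + P1 (n + 1)) = K3 n * P1 n) :
    ((n + 1).factorial : ℝ) * (P0 (n + 1) + P1 (n + 1))
      = K3 n * ((n.factorial : ℝ) * (P0 n + P1 n) - n.factorial * P0 n) := by
  rw [Nat.factorial_succ, Nat.cast_mul, Nat.cast_succ]
  linear_combination (n.factorial : ℝ) * hflux

theorem factorial_mul_P0_succ {n : ℕ}
    (hCME0 : -K1 n * P0 n + K2 n * P1 n + ((n : ℝ) + 1) * P0 (n + 1) - (n : ℝ) * P0 n = 0) :
    ((n + 1).factorial : ℝ) * P0 (n + 1)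
      = ((n : ℝ) + K1 n + K2 n) * (n.factorial * P0 n)
        - K2 n * (n.factorial * (P0 n + P1 n)) := by
  rw [Nat.factorial_succ, Nat.cast_mul, Nat.cast_succ]
  linear_combination (n.factorial : ℝ) * hCME0

theorem update_zero_one_succ {a : ℕ → ℝ} (ha1 : a 1 = K3 0)
    (haRec : ∀ n : ℕ, 2 ≤ n →
      a n = K3 (n - 1) * a (n - 1)
        + K3 (n - 1) * ∑ i ∈ Icc 1 (n - 2), K2 i * a i *
            ∏ j ∈ Icc (i + 1) (n - 2), ((j : ℝ) + K1 j + K2 j)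
        + K3 (n - 1) * K2 0 * ∏ i ∈ Icc 1 (n - 2), ((i : ℝ) + K1 i + K2 i))
    (n : ℕ) :
    Function.update a 0 1 (n + 1) = K3 n * (Function.update a 0 1 n
      + ∑ i ∈ range n, K2 i * Function.update a 0 1 i *
          ∏ j ∈ Ico (i + 1) n, ((j : ℝ) + K1 j + K2 j)) := by
  cases n with
  | zero => simp [ha1]
  | succ m =>
    rw [sum_range_update_zero_mul_prod, Function.update_of_ne (by omega),
      Function.update_of_ne (by omega), haRec (m + 2) (by omega)]
    simp only [show m + 2 - 1 = m + 1 by omega, Nat.add_sub_cancel, mul_one]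
    ring

theorem update_zero_zero_succ {b : ℕ → ℝ} (hb1 : b 1 = K3 0)
    (hbRec : ∀ n : ℕ, 2 ≤ n →
      b n = K3 (n - 1) * b (n - 1)
        + K3 (n - 1) * ∑ i ∈ Icc 1 (n - 2), K2 i * b i *
            ∏ j ∈ Icc (i + 1) (n - 2), ((j : ℝ) + K1 j + K2 j)
        + K3 (n - 1) * ∏ i ∈ range (n - 1), ((i : ℝ) + K1 i + K2 i))
    (n : ℕ) :
    Function.update b 0 0 (n + 1) = K3 n * (Function.update b 0 0 n
      + ∑ i ∈ range n, K2 i * Function.update b 0 0 i *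
          ∏ j ∈ Ico (i + 1) n, ((j : ℝ) + K1 j + K2 j)
      + ∏ i ∈ range n, ((i : ℝ) + K1 i + K2 i)) := by
  cases n with
  | zero => simp [hb1]
  | succ m =>
    rw [sum_range_update_zero_mul_prod, Function.update_of_ne (by omega),
      Function.update_of_ne (by omega), hbRec (m + 2) (by omega)]
    simp only [show m + 2 - 1 = m + 1 by omega, Nat.add_sub_cancel, mul_zero, zero_mul,
      add_zero]
    ring

end OnOffModel

/-- Lemma 2 of the paper: for solutions of the steady-state CME of the
generalized ON-OFF model, with the paper's auxiliary sequences `a`, `b`,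
the stationary distribution satisfies `P(n) = (1/n!)·[a_n·P(0) − b_n·P0(0)]` for `n ≥ 1`. -/
theorem cme_P_formal_expression (K1 K2 K3 P0 P1 P a b : ℕ → ℝ)
    (hCME0 : ∀ n : ℕ,
      -K1 n * P0 n + K2 n * P1 n + ((n : ℝ) + 1) * P0 (n + 1) - (n : ℝ) * P0 n = 0)
    (hCME1 : ∀ n : ℕ,
      K1 n * P0 n - K2 n * P1 n + (if n = 0 then 0 else K3 (n - 1) * P1 (n - 1))
        - K3 n * P1 n + ((n : ℝ) + 1) * P1 (n + 1) - (n : ℝ) * P1 n = 0)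
    (hP : ∀ n : ℕ, P n = P0 n + P1 n)
    (ha1 : a 1 = K3 0)
    (haRec : ∀ n : ℕ, 2 ≤ n →
      a n = K3 (n - 1) * a (n - 1)
        + K3 (n - 1) * ∑ i ∈ Finset.Icc 1 (n - 2), K2 i * a i *
            ∏ j ∈ Finset.Icc (i + 1) (n - 2), ((j : ℝ) + K1 j + K2 j)
        + K3 (n - 1) * K2 0 * ∏ i ∈ Finset.Icc 1 (n - 2), ((i : ℝ) + K1 i + K2 i))
    (hb1 : b 1 = K3 0)
    (hbRec : ∀ n : ℕ, 2 ≤ n →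
      b n = K3 (n - 1) * b (n - 1)
        + K3 (n - 1) * ∑ i ∈ Finset.Icc 1 (n - 2), K2 i * b i *
            ∏ j ∈ Finset.Icc (i + 1) (n - 2), ((j : ℝ) + K1 j + K2 j)
        + K3 (n - 1) * ∏ i ∈ Finset.range (n - 1), ((i : ℝ) + K1 i + K2 i)) :
    ∀ n : ℕ, 1 ≤ n →
      P n = (1 / (n.factorial : ℝ)) * (a n * P 0 - b n * P0 0) := by
  obtain rfl : P = fun n => P0 n + P1 n := funext hP
  intro n hn
  have key := eq_mul_sub_mul_of_triangular_recurrence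
    (u := fun n => (n.factorial : ℝ) * (P0 n + P1 n)) (v := fun n => (n.factorial : ℝ) * P0 n)
    (fun n => factorial_mul_succ_of_flux_balance (flux_balance hCME0 hCME1 n))
    (fun n => factorial_mul_P0_succ (hCME0 n))
    (Function.update_self ..) (update_zero_one_succ ha1 haRec)
    (Function.update_self ..) (update_zero_zero_succ hb1 hbRec) n
  simp only [Function.update_of_ne (show n ≠ 0 by omega), Nat.factorial_zero, Nat.cast_one,
    one_mul] at key
  rw [← key]
  field_simp
end

section
/- Suppose P0, P1 : ℕ → ℝ satisfy the steady-state CME of the generalized ON-OFF model with rate functions K1, K2, K3 : ℕ → ℝ, and set P(n) = P0(n) + P1(n). Let (a_n), (b_n), (c_n), (d_n) be the paper's auxiliary sequences associated with K1, K2, K3. Then for every n ≥ 1, P1(n) = (1/n!)·[(a_n + c_n)·P(0) − (b_n + d_n)·P0(0)]. -/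
/-!
Adding the two balance equations shows that the net flux `(n+1)·P(n+1) − K3(n)·P1(n)` does not
depend on `n`; the equation at `n = 0` has no inflow term, so the flux is `0` and
`(n+1)·P(n+1) = K3(n)·P1(n)`. Together with the first
equation, `(n+1)·P0(n+1) = (n + K1(n) + K2(n))·P0(n) − K2(n)·P(n)`, this is a first-order linear
recurrence for the pair `(n!·P(n), n!·P0(n))`. The auxiliary sequences are exactly its solution
in the basis `P(0), P0(0)`: they satisfy `a_{n+1} = K3(n)(a_n + c_n)`,
`c_{n+1} = (n + K1(n) + K2(n))c_n + K2(n)a_n`, and likewise for `b`, `d`. Finally `P1 = P − P0`.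
-/

open Finset

theorem sum_Icc_mul_prod_Icc_succ_top {R : Type*} [CommSemiring R] (u w : ℕ → R) (m : ℕ) :
    ∑ i ∈ Icc 1 (m + 1), u i * ∏ j ∈ Icc (i + 1) (m + 1), w j
      = (∑ i ∈ Icc 1 m, u i * ∏ j ∈ Icc (i + 1) m, w j) * w (m + 1) + u (m + 1) := by
  rw [sum_Icc_succ_top (by omega), Icc_eq_empty_of_lt (Nat.lt_succ_self _), prod_empty, mul_one,
    sum_mul]
  congr 1
  refine sum_congr rfl fun i hi => ?_
  rw [prod_Icc_succ_top (by simp at hi; omega), mul_assoc]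

namespace OnOffCME

variable {K1 K2 K3 P0 P1 P a b c d : ℕ → ℝ}

theorem flux_balance
    (hCME0 : ∀ n : ℕ,
      -K1 n * P0 n + K2 n * P1 n + ((n : ℝ) + 1) * P0 (n + 1) - (n : ℝ) * P0 n = 0)
    (hCME1 : ∀ n : ℕ,
      K1 n * P0 n - K2 n * P1 n + (if n = 0 then 0 else K3 (n - 1) * P1 (n - 1))
        - K3 n * P1 n + ((n : ℝ) + 1) * P1 (n + 1) - (n : ℝ) * P1 n = 0)
    (hP : ∀ n : ℕ, P n = P0 n + P1 n) (n : ℕ) :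
    ((n : ℝ) + 1) * P (n + 1) = K3 n * P1 n := by
  induction n with
  | zero =>
    have h1 := hCME1 0
    rw [if_pos rfl] at h1
    linear_combination hCME0 0 + h1 + hP 1
  | succ n ih =>
    have h0 := hCME0 (n + 1)
    have h1 := hCME1 (n + 1)
    rw [if_neg n.succ_ne_zero, Nat.add_sub_cancel] at h1
    push_cast at h0 h1 ⊢
    linear_combination h0 + h1 + ((n : ℝ) + 2) * hP (n + 2)
      - ((n : ℝ) + 1) * hP (n + 1) + ih

theorem P0_succ
    (hCME0 : ∀ n : ℕ,
      -K1 n * P0 n + K2 n * P1 n + ((n : ℝ) + 1) * P0 (n + 1) - (n : ℝ) * P0 n = 0)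
    (hP : ∀ n : ℕ, P n = P0 n + P1 n) (n : ℕ) :
    ((n : ℝ) + 1) * P0 (n + 1) = ((n : ℝ) + K1 n + K2 n) * P0 n - K2 n * P n := by
  linear_combination hCME0 n + K2 n * hP n

theorem c_one
    (hc : ∀ n : ℕ, 1 ≤ n →
      c n = ∑ i ∈ Icc 1 (n - 1), K2 i * a i *
          ∏ j ∈ Icc (i + 1) (n - 1), ((j : ℝ) + K1 j + K2 j)
        + K2 0 * ∏ i ∈ Icc 1 (n - 1), ((i : ℝ) + K1 i + K2 i)) :
    c 1 = K2 0 := by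
  simp [hc 1 le_rfl]

theorem d_one
    (hd : ∀ n : ℕ, 1 ≤ n →
      d n = ∑ i ∈ Icc 1 (n - 1), K2 i * b i *
          ∏ j ∈ Icc (i + 1) (n - 1), ((j : ℝ) + K1 j + K2 j)
        + ∏ i ∈ range n, ((i : ℝ) + K1 i + K2 i)) :
    d 1 = K1 0 + K2 0 := by
  simp [hd 1 le_rfl]

theorem a_succ
    (haRec : ∀ n : ℕ, 2 ≤ n →
      a n = K3 (n - 1) * a (n - 1)
        + K3 (n - 1) * ∑ i ∈ Icc 1 (n - 2), K2 i * a i *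
            ∏ j ∈ Icc (i + 1) (n - 2), ((j : ℝ) + K1 j + K2 j)
        + K3 (n - 1) * K2 0 * ∏ i ∈ Icc 1 (n - 2), ((i : ℝ) + K1 i + K2 i))
    (hc : ∀ n : ℕ, 1 ≤ n →
      c n = ∑ i ∈ Icc 1 (n - 1), K2 i * a i *
          ∏ j ∈ Icc (i + 1) (n - 1), ((j : ℝ) + K1 j + K2 j)
        + K2 0 * ∏ i ∈ Icc 1 (n - 1), ((i : ℝ) + K1 i + K2 i))
    {n : ℕ} (hn : 1 ≤ n) :
    a (n + 1) = K3 n * (a n + c n) := by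
  rw [haRec (n + 1) (by omega), hc n hn, show n + 1 - 2 = n - 1 by omega, Nat.add_sub_cancel]
  ring

theorem b_succ
    (hbRec : ∀ n : ℕ, 2 ≤ n →
      b n = K3 (n - 1) * b (n - 1)
        + K3 (n - 1) * ∑ i ∈ Icc 1 (n - 2), K2 i * b i *
            ∏ j ∈ Icc (i + 1) (n - 2), ((j : ℝ) + K1 j + K2 j)
        + K3 (n - 1) * ∏ i ∈ range (n - 1), ((i : ℝ) + K1 i + K2 i))
    (hd : ∀ n : ℕ, 1 ≤ n →
      d n = ∑ i ∈ Icc 1 (n - 1), K2 i * b i *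
          ∏ j ∈ Icc (i + 1) (n - 1), ((j : ℝ) + K1 j + K2 j)
        + ∏ i ∈ range n, ((i : ℝ) + K1 i + K2 i))
    {n : ℕ} (hn : 1 ≤ n) :
    b (n + 1) = K3 n * (b n + d n) := by
  rw [hbRec (n + 1) (by omega), hd n hn, show n + 1 - 2 = n - 1 by omega, Nat.add_sub_cancel]
  ring

theorem c_succ
    (hc : ∀ n : ℕ, 1 ≤ n →
      c n = ∑ i ∈ Icc 1 (n - 1), K2 i * a i *
          ∏ j ∈ Icc (i + 1) (n - 1), ((j : ℝ) + K1 j + K2 j)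
        + K2 0 * ∏ i ∈ Icc 1 (n - 1), ((i : ℝ) + K1 i + K2 i))
    {n : ℕ} (hn : 1 ≤ n) :
    c (n + 1) = ((n : ℝ) + K1 n + K2 n) * c n + K2 n * a n := by
  obtain ⟨m, rfl⟩ : ∃ m, n = m + 1 := ⟨n - 1, by omega⟩
  rw [hc (m + 1 + 1) (by omega), hc (m + 1) hn]
  simp only [Nat.add_sub_cancel]
  rw [sum_Icc_mul_prod_Icc_succ_top, prod_Icc_succ_top (by omega)]
  ring

theorem d_succ
    (hd : ∀ n : ℕ, 1 ≤ n →
      d n = ∑ i ∈ Icc 1 (n - 1), K2 i * b i *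
          ∏ j ∈ Icc (i + 1) (n - 1), ((j : ℝ) + K1 j + K2 j)
        + ∏ i ∈ range n, ((i : ℝ) + K1 i + K2 i))
    {n : ℕ} (hn : 1 ≤ n) :
    d (n + 1) = ((n : ℝ) + K1 n + K2 n) * d n + K2 n * b n := by
  obtain ⟨m, rfl⟩ : ∃ m, n = m + 1 := ⟨n - 1, by omega⟩
  rw [hd (m + 1 + 1) (by omega), hd (m + 1) hn]
  simp only [Nat.add_sub_cancel]
  rw [sum_Icc_mul_prod_Icc_succ_top, prod_range_succ _ (m + 1)]
  ring

theorem factorial_mul_P_and_factorial_mul_P0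
    (hP : ∀ n : ℕ, P n = P0 n + P1 n)
    (hflux : ∀ n : ℕ, ((n : ℝ) + 1) * P (n + 1) = K3 n * P1 n)
    (hP0 : ∀ n : ℕ,
      ((n : ℝ) + 1) * P0 (n + 1) = ((n : ℝ) + K1 n + K2 n) * P0 n - K2 n * P n)
    (ha1 : a 1 = K3 0) (hb1 : b 1 = K3 0) (hc1 : c 1 = K2 0) (hd1 : d 1 = K1 0 + K2 0)
    (ha : ∀ n : ℕ, 1 ≤ n → a (n + 1) = K3 n * (a n + c n))
    (hb : ∀ n : ℕ, 1 ≤ n → b (n + 1) = K3 n * (b n + d n))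
    (hc : ∀ n : ℕ, 1 ≤ n → c (n + 1) = ((n : ℝ) + K1 n + K2 n) * c n + K2 n * a n)
    (hd : ∀ n : ℕ, 1 ≤ n → d (n + 1) = ((n : ℝ) + K1 n + K2 n) * d n + K2 n * b n)
    {n : ℕ} (hn : 1 ≤ n) :
    (n.factorial : ℝ) * P n = a n * P 0 - b n * P0 0 ∧
      (n.factorial : ℝ) * P0 n = d n * P0 0 - c n * P 0 := by
  induction n, hn using Nat.le_induction with
  | base =>
    simp only [Nat.factorial_one, Nat.cast_one, one_mul, ha1, hb1, hc1, hd1]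
    exact ⟨by linear_combination hflux 0 - K3 0 * hP 0, by linear_combination hP0 0⟩
  | succ n hn ih =>
    obtain ⟨ihP, ihP0⟩ := ih
    rw [Nat.factorial_succ, Nat.cast_mul, Nat.cast_succ, ha n hn, hb n hn, hc n hn, hd n hn]
    constructor
    · linear_combination (n.factorial : ℝ) * hflux n + K3 n * ihP - K3 n * ihP0
        - K3 n * (n.factorial : ℝ) * hP n
    · linear_combination (n.factorial : ℝ) * hP0 n + ((n : ℝ) + K1 n + K2 n) * ihP0
        - K2 n * ihP

end OnOffCME

/-- Formula (10) of the paper: for solutions of the steady-state CME of the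
generalized ON-OFF model, with the paper's auxiliary sequences `a`, `b`, `c`, `d`,
one has `P1(n) = (1/n!)·[(a_n+c_n)·P(0) − (b_n+d_n)·P0(0)]` for `n ≥ 1`. -/
theorem cme_P1_formal_expression (K1 K2 K3 P0 P1 P a b c d : ℕ → ℝ)
    (hCME0 : ∀ n : ℕ,
      -K1 n * P0 n + K2 n * P1 n + ((n : ℝ) + 1) * P0 (n + 1) - (n : ℝ) * P0 n = 0)
    (hCME1 : ∀ n : ℕ,
      K1 n * P0 n - K2 n * P1 n + (if n = 0 then 0 else K3 (n - 1) * P1 (n - 1))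
        - K3 n * P1 n + ((n : ℝ) + 1) * P1 (n + 1) - (n : ℝ) * P1 n = 0)
    (hP : ∀ n : ℕ, P n = P0 n + P1 n)
    (ha1 : a 1 = K3 0)
    (haRec : ∀ n : ℕ, 2 ≤ n →
      a n = K3 (n - 1) * a (n - 1)
        + K3 (n - 1) * ∑ i ∈ Finset.Icc 1 (n - 2), K2 i * a i *
            ∏ j ∈ Finset.Icc (i + 1) (n - 2), ((j : ℝ) + K1 j + K2 j)
        + K3 (n - 1) * K2 0 * ∏ i ∈ Finset.Icc 1 (n - 2), ((i : ℝ) + K1 i + K2 i))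
    (hb1 : b 1 = K3 0)
    (hbRec : ∀ n : ℕ, 2 ≤ n →
      b n = K3 (n - 1) * b (n - 1)
        + K3 (n - 1) * ∑ i ∈ Finset.Icc 1 (n - 2), K2 i * b i *
            ∏ j ∈ Finset.Icc (i + 1) (n - 2), ((j : ℝ) + K1 j + K2 j)
        + K3 (n - 1) * ∏ i ∈ Finset.range (n - 1), ((i : ℝ) + K1 i + K2 i))
    (hc : ∀ n : ℕ, 1 ≤ n →
      c n = ∑ i ∈ Finset.Icc 1 (n - 1), K2 i * a i *
            ∏ j ∈ Finset.Icc (i + 1) (n - 1), ((j : ℝ) + K1 j + K2 j)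
        + K2 0 * ∏ i ∈ Finset.Icc 1 (n - 1), ((i : ℝ) + K1 i + K2 i))
    (hd : ∀ n : ℕ, 1 ≤ n →
      d n = ∑ i ∈ Finset.Icc 1 (n - 1), K2 i * b i *
            ∏ j ∈ Finset.Icc (i + 1) (n - 1), ((j : ℝ) + K1 j + K2 j)
        + ∏ i ∈ Finset.range n, ((i : ℝ) + K1 i + K2 i)) :
    ∀ n : ℕ, 1 ≤ n →
      P1 n = (1 / (n.factorial : ℝ)) * ((a n + c n) * P 0 - (b n + d n) * P0 0) := by
  intro n hn
  open OnOffCME in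
  obtain ⟨hPn, hP0n⟩ := factorial_mul_P_and_factorial_mul_P0 hP (flux_balance hCME0 hCME1 hP)
    (P0_succ hCME0 hP) ha1 hb1 (c_one hc) (d_one hd) (fun _ => a_succ haRec hc)
    (fun _ => b_succ hbRec hd) (fun _ => c_succ hc) (fun _ => d_succ hd) hn
  have hfac : (n.factorial : ℝ) ≠ 0 := by positivity
  field_simp
  linear_combination hPn - hP0n - (n.factorial : ℝ) * hP n
end

section
/- Let α, β, μ be positive reals. Then Σ_{n=0}^{∞} (μ^n/n!) · (α)_n/(α + β)_n · ₁F₁(α + n, α + β + n; −μ) = 1; that is, the stationary protein distribution P(n) = (μ^n/n!)·(α)_n/(α + β)_n·₁F₁(α + n, α + β + n; −μ) of the common ON-OFF model with constant normalized rates α, β, μ is correctly normalized. -/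
/-! Write `c k = (α)_k / (α + β)_k` and `f z = Σₖ c k zᵏ/k!`. Since
`(α)_(n+m) = (α)_n (α + n)_m`, the `n`-th term is `μⁿ/n! · Σₘ c (n + m) (-μ)ᵐ/m!`, the `n`-th term
of the Taylor expansion of `f` about `-μ`, evaluated at `-μ + μ = 0`. As `0 < c k ≤ 1` the double
series converges absolutely, so the sum is `f 0 = c 0 = 1`. -/

open Finset

/-- The ascending Pochhammer symbol `(x)_n = x(x+1)⋯(x+n−1)`. -/
noncomputable def poch (x : ℝ) (n : ℕ) : ℝ := ∏ i ∈ Finset.range n, (x + (i : ℝ))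

/-- The confluent hypergeometric series `₁F₁(a, b; z) = Σ_{n=0}^∞ (a)_n/(b)_n · zⁿ/n!`. -/
noncomputable def F11 (a b z : ℝ) : ℝ := ∑' n : ℕ, poch a n / poch b n * z ^ n / (n.factorial : ℝ)

theorem Summable.tsum_prod_eq_tsum_sum_antidiagonal {α A : Type*} [AddCommMonoid α]
    [TopologicalSpace α] [ContinuousAdd α] [T3Space α] [AddCommMonoid A] [HasAntidiagonal A]
    {f : A × A → α} (hf : Summable f) :
    ∑' p, f p = ∑' n, ∑ p ∈ antidiagonal n, f p := by
  rw [← HasAntidiagonal.sigmaAntidiagonalEquivProd.tsum_eq f]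
  refine ((HasAntidiagonal.sigmaAntidiagonalEquivProd.summable_iff.mpr hf).tsum_sigma'
      fun n => (hasSum_fintype _).summable).trans ?_
  exact tsum_congr fun n => by rw [tsum_fintype]; exact Finset.sum_coe_sort _ f

noncomputable def egf (c : ℕ → ℝ) (z : ℝ) : ℝ :=
  ∑' k : ℕ, c k * z ^ k / (k.factorial : ℝ)

theorem egf_zero (c : ℕ → ℝ) : egf c 0 = c 0 := by
  rw [egf, tsum_eq_single 0 fun k hk => by simp [zero_pow hk]]
  simp

theorem sum_antidiagonal_pow_div_factorial_mul (c : ℕ → ℝ) (x y : ℝ) (k : ℕ) :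
    ∑ p ∈ antidiagonal k, x ^ p.1 / p.1.factorial * (c (p.1 + p.2) * y ^ p.2 / p.2.factorial) =
      c k * (x + y) ^ k / k.factorial := by
  rw [(Commute.all x y).add_pow', mul_sum, sum_div]
  refine sum_congr rfl fun ⟨i, j⟩ hij => ?_
  obtain rfl : i + j = k := mem_antidiagonal.mp hij
  rw [nsmul_eq_mul, Nat.cast_add_choose]
  field_simp

theorem egf_add {c : ℕ → ℝ} {C : ℝ} (hc : ∀ k, |c k| ≤ C) (x y : ℝ) :
    egf c (x + y) = ∑' n : ℕ, x ^ n / n.factorial * egf (fun m => c (n + m)) y := by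
  set g : ℕ × ℕ → ℝ := fun p =>
    x ^ p.1 / p.1.factorial * (c (p.1 + p.2) * y ^ p.2 / p.2.factorial)
  have hg : Summable g := by
    have hdom := (Real.summable_pow_div_factorial |x|).mul_of_nonneg
      (Real.summable_pow_div_factorial |y|) (fun _ => by positivity) (fun _ => by positivity)
    refine (hdom.mul_left C).of_norm_bounded fun p => ?_
    simp only [g, Real.norm_eq_abs, abs_mul, abs_div, abs_pow, Nat.abs_cast]
    calc _ = |c (p.1 + p.2)| * (|x| ^ p.1 / p.1.factorial * (|y| ^ p.2 / p.2.factorial)) := by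
          ring
      _ ≤ _ := by gcongr; exact hc _
  simp only [egf, ← tsum_mul_left]
  rw [← hg.tsum_prod' hg.prod_factor, hg.tsum_prod_eq_tsum_sum_antidiagonal]
  exact tsum_congr fun k => (sum_antidiagonal_pow_div_factorial_mul c x y k).symm

theorem poch_pos {x : ℝ} (hx : 0 < x) (n : ℕ) : 0 < poch x n :=
  prod_pos fun _ _ => by positivity

theorem poch_le_poch {x y : ℝ} (hx : 0 < x) (hxy : x ≤ y) (n : ℕ) : poch x n ≤ poch y n :=
  prod_le_prod (fun _ _ => by positivity) fun _ _ => by linarith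

theorem poch_add (x : ℝ) (n m : ℕ) : poch x (n + m) = poch x n * poch (x + n) m := by
  rw [poch, prod_range_add]
  congr 1
  exact prod_congr rfl fun i _ => by push_cast; ring

theorem abs_poch_div_poch_le_one {x y : ℝ} (hx : 0 < x) (hxy : x ≤ y) (n : ℕ) :
    |poch x n / poch y n| ≤ 1 := by
  have hy := poch_pos (hx.trans_le hxy) n
  rw [abs_of_pos (div_pos (poch_pos hx n) hy), div_le_one hy]
  exact poch_le_poch hx hxy n

theorem poch_div_poch_mul_F11 (a b z : ℝ) (n : ℕ) :
    poch a n / poch b n * F11 (a + n) (b + n) z =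
      egf (fun m => poch a (n + m) / poch b (n + m)) z := by
  rw [F11, egf, ← tsum_mul_left]
  refine tsum_congr fun m => ?_
  rw [poch_add, poch_add, mul_div_assoc, mul_div_assoc, ← mul_assoc, div_mul_div_comm]

theorem onoff_distribution_normalized_general (α β μ : ℝ)
    (hα : 0 < α) (hβ : 0 < β) :
    ∑' n : ℕ, (μ ^ n / (n.factorial : ℝ)) * (poch α n / poch (α + β) n)
        * F11 (α + n) (α + β + n) (-μ) = 1 := by
  set c : ℕ → ℝ := fun k => poch α k / poch (α + β) k
  have hc : ∀ k, |c k| ≤ 1 := abs_poch_div_poch_le_one hα (by linarith)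
  calc ∑' n : ℕ, μ ^ n / n.factorial * c n * F11 (α + n) (α + β + n) (-μ)
      = ∑' n : ℕ, μ ^ n / n.factorial * egf (fun m => c (n + m)) (-μ) :=
        tsum_congr fun n => by rw [mul_assoc, poch_div_poch_mul_F11]
    _ = egf c (μ + -μ) := (egf_add hc μ (-μ)).symm
    _ = 1 := by simp [egf_zero, c, poch]

/-- The stationary protein distribution (20) of the common ON-OFF model with constant
normalized rates `α, β, μ > 0`,
`P(n) = (μⁿ/n!)·(α)_n/(α+β)_n·₁F₁(α+n, α+β+n; −μ)`, is correctly normalized: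
`Σ_{n=0}^∞ P(n) = 1`. -/
theorem onoff_distribution_normalized (α β μ : ℝ)
    (hα : 0 < α) (hβ : 0 < β) (hμ : 0 < μ) :
    ∑' n : ℕ, (μ ^ n / (n.factorial : ℝ)) * (poch α n / poch (α + β) n)
        * F11 (α + n) (α + β + n) (-μ) = 1 :=
  onoff_distribution_normalized_general α β μ hα hβ
end
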